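/- For a lens F : A → B, the following are equivalent: (1) F is an epimorphism in the category Lens; (2) the get functor of F is surjective on objects; (3) the get functor of F is surjective on morphisms. -/

import Mathlib

universe u

open CategoryTheory CategoryTheory.Limits

namespace LensPaper

section OutDefs

variable {A : Type*} [Category A] {B : Type*} [Category B] {C : Type*} [Category C]

/-- The "out-set" of an object: the collection of all morphisms out of `X`,
bundled with their targets. -/
def Out (X : A) : Type _ := Σ Y : A, X ⟶ Y

/-- The identity element of an out-set. -/
def Out.id (X : A) : Out X := ⟨X, 𝟙 X⟩

/-- Composition of a morphism out of `X` with a morphism out of its target. -/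
def Out.comp {X : A} (u : Out X) (v : Out u.1) : Out X := ⟨v.1, u.2 ≫ v.2⟩

/-- Transport of out-sets along an equality of objects. -/
def Out.cast {X Y : A} (h : X = Y) (u : Out X) : Out Y := ⟨u.1, eqToHom h.symm ≫ u.2⟩

@[simp] theorem Out.cast_rfl {X : A} (u : Out X) : Out.cast rfl u = u := by
  cases u; simp [Out.cast]; rfl

theorem Out.cast_cast {X Y Z : A} (h₁ : X = Y) (h₂ : Y = Z) (u : Out X) :
    Out.cast h₂ (Out.cast h₁ u) = Out.cast (h₁.trans h₂) u := by
  subst h₁; subst h₂; simp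

/-- The action of a functor on out-sets. -/
def mapOut (F : A ⥤ B) {X : A} (u : Out X) : Out (F.obj X) := ⟨F.obj u.1, F.map u.2⟩

theorem mapOut_cast (F : A ⥤ B) {X Y : A} (h : X = Y) (u : Out X) :
    mapOut F (Out.cast h u) = Out.cast (congrArg F.obj h) (mapOut F u) := by
  subst h; simp

/-- The set of all morphisms of a category, bundled with their endpoints. -/
def Mor (A : Type*) [Category A] : Type _ := Σ (X Y : A), X ⟶ Y

/-- The action of a functor on morphisms, as a function on bundled morphisms. -/
def mapMor (F : A ⥤ B) : Mor A → Mor B := fun m => ⟨F.obj m.1, F.obj m.2.1, F.map m.2.2⟩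

/-- The set of composable pairs of morphisms of a category. -/
def CompPair (A : Type*) [Category A] : Type _ := Σ (X Y Z : A), (X ⟶ Y) × (Y ⟶ Z)

/-- The action of a functor on composable pairs. -/
def mapCompPair (F : A ⥤ B) : CompPair A → CompPair B :=
  fun p => ⟨F.obj p.1, F.obj p.2.1, F.obj p.2.2.1, (F.map p.2.2.2.1, F.map p.2.2.2.2)⟩

/-- A functor is a discrete opfibration if every morphism out of `F.obj X`
has a unique lift to a morphism out of `X`. -/
def IsDiscreteOpfibration (F : A ⥤ B) : Prop :=
  ∀ (X : A) (u : Out (F.obj X)), ∃! v : Out X, mapOut F v = u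

/-- A cosieve is an injective-on-objects discrete opfibration. -/
def IsCosieve (F : A ⥤ B) : Prop :=
  IsDiscreteOpfibration F ∧ Function.Injective F.obj

end OutDefs

/-- An (asymmetric delta) lens: a get functor together with put functions
satisfying PutGet, PutId and PutPut. -/
structure DLens (A : Type*) (B : Type*) [Category A] [Category B] where
  get : A ⥤ B
  put : ∀ (X : A), Out (get.obj X) → Out X
  putGet : ∀ (X : A) (u : Out (get.obj X)), mapOut get (put X u) = u
  putId : ∀ (X : A), put X (Out.id (get.obj X)) = Out.id X
  putPut : ∀ (X : A) (u : Out (get.obj X)) (v : Out u.1) (h : u.1 = get.obj (put X u).1),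
      put X (u.comp v) = (put X u).comp (put (put X u).1 (Out.cast h v))

namespace DLens

variable {A : Type*} [Category A] {B : Type*} [Category B] {C : Type*} [Category C]

theorem put_cast (F : DLens A B) {X₁ X₂ : A} (e : X₁ = X₂) (u : Out (F.get.obj X₁)) :
    Out.cast e (F.put X₁ u) = F.put X₂ (Out.cast (congrArg F.get.obj e) u) := by
  subst e; simp

/-- The identity lens. -/
def id (A : Type*) [Category A] : DLens A A where
  get := Functor.id A
  put X u := u
  putGet X u := rfl
  putId X := rfl
  putPut X u v h := by
    have hv : Out.cast h v = v := Out.cast_rfl v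
    rw [hv]

/-- Composition of lenses. -/
def comp (F : DLens A B) (G : DLens B C) : DLens A C where
  get := F.get ⋙ G.get
  put X u := F.put X (G.put (F.get.obj X) u)
  putGet X u := by
    show mapOut G.get (mapOut F.get (F.put X (G.put (F.get.obj X) u))) = u
    rw [F.putGet, G.putGet]
  putId X := by
    show F.put X (G.put (F.get.obj X) (Out.id (G.get.obj (F.get.obj X)))) = Out.id X
    rw [G.putId, F.putId]
  putPut X u v h := by
    have h₁ : u.1 = G.get.obj (G.put (F.get.obj X) u).1 :=
      (congrArg Sigma.fst (G.putGet (F.get.obj X) u)).symm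
    show F.put X (G.put (F.get.obj X) (u.comp v)) = _
    rw [G.putPut (F.get.obj X) u v h₁]
    have h₂ : (G.put (F.get.obj X) u).1 =
        F.get.obj (F.put X (G.put (F.get.obj X) u)).1 :=
      (congrArg Sigma.fst (F.putGet X (G.put (F.get.obj X) u))).symm
    rw [F.putPut X (G.put (F.get.obj X) u) _ h₂]
    rw [put_cast G h₂, Out.cast_cast]

end DLens

/-- The category of small categories and (asymmetric delta) lenses. -/
def LensCat : Type (u + 1) := Cat.{u, u}

/-- Regard a small category as an object of the category of lenses. -/
def LensCat.of (C : Cat.{u, u}) : LensCat.{u} := C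

/-- The underlying small category of an object of the category of lenses. -/
def LensCat.toCat (A : LensCat.{u}) : Cat.{u, u} := A

instance : Category.{u} LensCat.{u} where
  Hom A B := DLens A.toCat B.toCat
  id A := DLens.id A.toCat
  comp F G := F.comp G
  id_comp F := rfl
  comp_id F := rfl
  assoc F G H := rfl

/-- The get functor of a lens, i.e. a morphism of `LensCat` regarded as a `DLens`. -/
def LensCat.get {A B : LensCat.{u}} (F : A ⟶ B) : A.toCat ⟶ B.toCat := (DLens.get F).toCatHom

/-- The identity-on-objects forgetful functor from the category of lenses to the
category of small categories and functors, sending a lens to its get functor. -/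
def lensForget : LensCat.{u} ⥤ Cat.{u, u} where
  obj A := A.toCat
  map F := (DLens.get F).toCatHom
  map_id A := rfl
  map_comp F G := rfl

end LensPaper
open CategoryTheory CategoryTheory.Limits LensPaper


/-!
The image of a lens `F : A → B` is closed under morphisms out of it, since a morphism out of
`F X` lifts along `F`. If `F` is surjective on objects, every morphism of `B` is the image of
a lift, so `F ≫ G` determines the get functor of `G`; as `F.put X` has the left inverse
`mapOut F.get`, it determines the puts of `G` as well.

If instead the image `S` misses an object, glue two copies of `B` along `S`. Each copy
includes as a discrete opfibration, hence as a lens; the two inclusions agree after `F` but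
differ outside `S`, so `F` is not an epimorphism.
-/

namespace LensPaper

section Functors

variable {A : Type*} [Category A] {B : Type*} [Category B]

theorem mapOut_id (F : A ⥤ B) (X : A) : mapOut F (Out.id X) = Out.id (F.obj X) := by
  unfold mapOut Out.id
  rw [F.map_id]

theorem mapOut_comp (F : A ⥤ B) {X : A} (u : Out X) (v : Out u.1) :
    mapOut F (u.comp v) = (mapOut F u).comp (mapOut F v) := by
  unfold mapOut Out.comp
  rw [F.map_comp]

theorem mapOut_comp_of_eq (F : A ⥤ B) {X : A} (w : Out X) (w' : Out w.1) {u : Out (F.obj X)}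
    (hw : mapOut F w = u) (h : u.1 = F.obj w.1) {v : Out u.1} (hw' : mapOut F w' = v.cast h) :
    mapOut F (w.comp w') = u.comp v := by
  subst hw
  rw [mapOut_comp, hw']
  exact congrArg (mapOut F w).comp (Out.cast_rfl v)

theorem mapOut_injective (F : A ⥤ B) [F.Faithful] (hF : Function.Injective F.obj) (X : A) :
    Function.Injective (mapOut F (X := X)) := by
  rintro ⟨Y, f⟩ ⟨Y', f'⟩ h
  obtain ⟨hY, hf⟩ := Sigma.mk.inj h
  obtain rfl : Y = Y' := hF hY
  obtain rfl : f = f' := F.map_injective (eq_of_heq hf)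
  rfl

theorem Mor.mk_eq_mk_iff {X Y X' Y' : A} (f : X ⟶ Y) (f' : X' ⟶ Y') :
    (⟨X, Y, f⟩ : Mor A) = ⟨X', Y', f'⟩ ↔ X = X' ∧ Y = Y' ∧ f ≍ f' := by
  constructor
  · rintro ⟨⟩
    exact ⟨rfl, rfl, HEq.rfl⟩
  · rintro ⟨rfl, rfl, h⟩
    cases h
    rfl

theorem mapMor_injective : Function.Injective (mapMor : (A ⥤ B) → Mor A → Mor B) := by
  intro F G h
  have hmor {X Y : A} (f : X ⟶ Y) := (Mor.mk_eq_mk_iff _ _).1 (congrFun h ⟨X, Y, f⟩)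
  exact Functor.hext (fun X => (hmor (𝟙 X)).1) fun X Y f => (hmor f).2.2

end Functors

structure ForwardClosedSet (B : Type*) [Category B] where
  carrier : Set B
  closed : ∀ ⦃X Y : B⦄, (X ⟶ Y) → X ∈ carrier → Y ∈ carrier

namespace DLens

variable {A : Type*} [Category A] {B : Type*} [Category B] {C : Type*} [Category C]

theorem ext {F G : DLens A B} (hget : F.get = G.get)
    (hput : ∀ X u, F.put X u = G.put X (u.cast (Functor.congr_obj hget X))) : F = G := by
  obtain ⟨get, put, _⟩ := F
  obtain ⟨get', put', _⟩ := G
  obtain rfl : get = get' := hget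
  obtain rfl : put = put' := funext fun X => funext fun u => by simpa using hput X u
  rfl

theorem congr_put {F G : DLens A B} (h : F = G) (X : A) (u : Out (F.get.obj X)) :
    F.put X u = G.put X (u.cast (Functor.congr_obj (congrArg get h) X)) := by
  subst h
  simp

theorem put_injective (F : DLens A B) (X : A) : Function.Injective (F.put X) :=
  Function.LeftInverse.injective (F.putGet X)

theorem mapMor_get_surjective (F : DLens A B) (hF : Function.Surjective F.get.obj) :
    Function.Surjective (mapMor F.get) := by
  rintro ⟨Y, Z, b⟩
  obtain ⟨X, rfl⟩ := hF Y
  obtain ⟨⟨X', a⟩, hlift⟩ : ∃ v, F.put X ⟨Z, b⟩ = v := ⟨_, rfl⟩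
  have hab := Sigma.mk.inj (hlift ▸ F.putGet X ⟨Z, b⟩)
  exact ⟨⟨X, X', a⟩, (Mor.mk_eq_mk_iff _ _).2 ⟨rfl, hab⟩⟩

theorem cancel_left_of_surjective (F : DLens A B) (hF : Function.Surjective F.get.obj)
    {G₁ G₂ : DLens B C} (h : F.comp G₁ = F.comp G₂) : G₁ = G₂ := by
  have hget : G₁.get = G₂.get := mapMor_injective <|
    (F.mapMor_get_surjective hF).injective_comp_right
      (congrArg (fun L : DLens A C => mapMor L.get) h)
  refine ext hget fun Y u => ?_
  obtain ⟨X, rfl⟩ := hF Y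
  exact F.put_injective X (congr_put h X u)

def range (F : DLens A B) : ForwardClosedSet B where
  carrier := Set.range F.get.obj
  closed := by
    rintro _ Y f ⟨X, rfl⟩
    exact ⟨(F.put X ⟨Y, f⟩).1, congrArg Sigma.fst (F.putGet X ⟨Y, f⟩)⟩

noncomputable def ofIsDiscreteOpfibration (F : A ⥤ B) (hF : IsDiscreteOpfibration F) :
    DLens A B where
  get := F
  put X u := (hF X u).exists.choose
  putGet X u := (hF X u).exists.choose_spec
  putId X := (hF X _).unique (hF X _).exists.choose_spec (mapOut_id F X)
  putPut X u _ h := (hF X _).unique (hF X _).exists.choose_spec <|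
    mapOut_comp_of_eq F _ _ (hF X u).exists.choose_spec h (hF _ _).exists.choose_spec

theorem ofIsDiscreteOpfibration_put_eq {F : A ⥤ B} (hF : IsDiscreteOpfibration F) {X : A}
    {u : Out (F.obj X)} {v : Out X} (hv : mapOut F v = u) :
    (ofIsDiscreteOpfibration F hF).put X u = v :=
  (hF X u).unique (hF X u).exists.choose_spec hv

end DLens

section

variable {B : Type*} [Category B] (S : ForwardClosedSet B)

/-- Two copies of `B` glued along `S`: an object outside `S` exists in both copies, told
apart by `copy`, and a morphism into an object outside `S` stays within one copy. -/
structure Doubled where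
  base : B
  copy : Bool
  copy_of_mem : base ∈ S.carrier → copy = true

instance : Category (Doubled S) where
  Hom P Q := {f : P.base ⟶ Q.base // Q.base ∉ S.carrier → P.copy = Q.copy}
  id _ := ⟨𝟙 _, fun _ => rfl⟩
  comp f g := ⟨f.1 ≫ g.1, fun hZ => (f.2 fun hY => hZ (S.closed g.1 hY)).trans (g.2 hZ)⟩

namespace Doubled

variable {S}

theorem hom_heq {P P' Q Q' : Doubled S} (hP : P = P') (hQ : Q = Q') {f : P ⟶ Q} {f' : P' ⟶ Q'}
    (h : f.1 ≍ f'.1) : f ≍ f' := by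
  subst hP hQ
  exact heq_of_eq (Subtype.ext (eq_of_heq h))

theorem eqToHom_comp_val {P Q R : Doubled S} (e : P = Q) (g : Q ⟶ R) :
    (eqToHom e ≫ g).1 ≍ g.1 := by
  subst e
  rw [eqToHom_refl, Category.id_comp]

variable (ℓ : B → Bool) (hS : ∀ Y ∈ S.carrier, ℓ Y = true)
  (hℓ : ∀ ⦃X Y : B⦄, (X ⟶ Y) → Y ∉ S.carrier → ℓ X = ℓ Y)

def incl : B ⥤ Doubled S where
  obj Y := ⟨Y, ℓ Y, hS Y⟩
  map f := ⟨f, hℓ f⟩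

instance : (incl ℓ hS hℓ).Faithful where
  map_injective h := congrArg Subtype.val h

theorem mapOut_incl_val {X : B} (u : Out ((incl ℓ hS hℓ).obj X)) :
    mapOut (incl ℓ hS hℓ) ⟨u.1.base, u.2.1⟩ = u := by
  obtain ⟨⟨Y, j, hY⟩, f, hf⟩ := u
  obtain rfl : ℓ Y = j := by
    by_cases hYS : Y ∈ S.carrier
    · exact (hS Y hYS).trans (hY hYS).symm
    · exact (hℓ f hYS).symm.trans (hf hYS)
  rfl

theorem isDiscreteOpfibration_incl : IsDiscreteOpfibration (incl ℓ hS hℓ) := fun X u =>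
  ⟨_, mapOut_incl_val ℓ hS hℓ u, fun _ hv =>
    mapOut_injective _ (fun _ _ h => congrArg Doubled.base h) X
      (hv.trans (mapOut_incl_val ℓ hS hℓ u).symm)⟩

noncomputable def inclLens : DLens B (Doubled S) :=
  DLens.ofIsDiscreteOpfibration _ (isDiscreteOpfibration_incl ℓ hS hℓ)

theorem inclLens_put {X : B} (u : Out ((incl ℓ hS hℓ).obj X)) :
    (inclLens ℓ hS hℓ).put X u = ⟨u.1.base, u.2.1⟩ :=
  DLens.ofIsDiscreteOpfibration_put_eq _ (mapOut_incl_val ℓ hS hℓ u)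

theorem comp_inclLens_eq {A : Type*} [Category A] (F : DLens A B)
    (hF : ∀ X, F.get.obj X ∈ S.carrier) (ℓ₁ ℓ₂ : B → Bool)
    (hS₁ : ∀ Y ∈ S.carrier, ℓ₁ Y = true) (hℓ₁ : ∀ ⦃X Y : B⦄, (X ⟶ Y) → Y ∉ S.carrier → ℓ₁ X = ℓ₁ Y)
    (hS₂ : ∀ Y ∈ S.carrier, ℓ₂ Y = true) (hℓ₂ : ∀ ⦃X Y : B⦄, (X ⟶ Y) → Y ∉ S.carrier → ℓ₂ X = ℓ₂ Y) :
    F.comp (inclLens ℓ₁ hS₁ hℓ₁) = F.comp (inclLens ℓ₂ hS₂ hℓ₂) := by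
  have hobj : ∀ X, (incl ℓ₁ hS₁ hℓ₁).obj (F.get.obj X) = (incl ℓ₂ hS₂ hℓ₂).obj (F.get.obj X) :=
    fun X => by simp [incl, hS₁ _ (hF X), hS₂ _ (hF X)]
  refine DLens.ext (Functor.hext hobj fun X Y f => hom_heq (hobj X) (hobj Y) HEq.rfl)
    fun X u => congrArg (F.put X) ?_
  refine (inclLens_put ℓ₁ hS₁ hℓ₁ u).trans (Eq.trans ?_ (inclLens_put ℓ₂ hS₂ hℓ₂ _).symm)
  exact Sigma.ext rfl (eqToHom_comp_val _ _).symm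

end Doubled

end

namespace DLens

variable {A : Type*} [Category A] {B : Type*} [Category B]

open Classical in
theorem exists_ne_comp_eq_comp_of_not_surjective (F : DLens A B)
    (hF : ¬Function.Surjective F.get.obj) :
    ∃ G₁ G₂ : DLens B (Doubled F.range), G₁ ≠ G₂ ∧ F.comp G₁ = F.comp G₂ := by
  obtain ⟨Y₀, hY₀⟩ := not_forall.1 hF
  let χ : B → Bool := fun Y => decide (Y ∈ F.range.carrier)
  have hχS : ∀ Y ∈ F.range.carrier, χ Y = true := fun _ => decide_eq_true
  have hχ : ∀ ⦃X Y : B⦄, (X ⟶ Y) → Y ∉ F.range.carrier → χ X = χ Y := fun _ _ f hY => by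
    have hX := mt (F.range.closed f) hY
    simp [χ, hX, hY]
  refine ⟨Doubled.inclLens (fun _ => true) (fun _ _ => rfl) (fun _ _ _ _ => rfl),
    Doubled.inclLens χ hχS hχ, fun h => hY₀ ?_,
    Doubled.comp_inclLens_eq F (fun X => Set.mem_range_self X) _ _ _ _ _ _⟩
  have hcopy : true = χ Y₀ :=
    congrArg (fun G : DLens B (Doubled F.range) => (G.get.obj Y₀).copy) h
  exact of_decide_eq_true hcopy.symm

end DLens

end LensPaper

/-- For a lens `F`, the following are equivalent: `F` is an
epimorphism in `Lens`; the get functor of `F` is surjective on objects; the get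
functor of `F` is surjective on morphisms. -/
theorem epi_lens_iff_surjective (A B : LensCat.{u}) (F : A ⟶ B) :
    (Epi F ↔ Function.Surjective (DLens.get F).obj) ∧
    (Epi F ↔ Function.Surjective (mapMor (DLens.get F))) := by
  have surj_of_epi (hF : Epi F) : Function.Surjective (DLens.get F).obj := by
    by_contra hns
    obtain ⟨G₁, G₂, hne, hcomp⟩ := DLens.exists_ne_comp_eq_comp_of_not_surjective F hns
    exact hne ((cancel_epi (Z := LensCat.of (Cat.of (Doubled (DLens.range F)))) F).1 hcomp)
  have epi_of_surj (hF : Function.Surjective (DLens.get F).obj) : Epi F :=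
    ⟨fun _ _ h => DLens.cancel_left_of_surjective F hF h⟩
  have surj_of_mapMor_surj (hF : Function.Surjective (mapMor (DLens.get F))) :
      Function.Surjective (DLens.get F).obj := fun Y =>
    let ⟨m, hm⟩ := hF ⟨Y, Y, 𝟙 Y⟩
    ⟨m.1, congrArg Sigma.fst hm⟩
  exact ⟨⟨surj_of_epi, epi_of_surj⟩,
    ⟨fun h => DLens.mapMor_get_surjective F (surj_of_epi h),
      fun h => epi_of_surj (surj_of_mapMor_surj h)⟩⟩
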